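/- arXiv:1111.6925 — 4 statements merged into one kernel-verified Lean document; each statement's English description precedes it below -/
import Mathlib

section
/- Factorization Theorem: Suppose the joint distribution P satisfies the local Markov conditions of the DAG given by the parent assignment pa, i.e. for every index i : Fin n and every configuration x, the conditional probability of the i-th coordinate given all preceding coordinates equals its conditional probability given its parents: P(x_i | x_{{0,…,i−1}}) = P(x_i | x_{pa(i)}). Then P factorizes according to the DAG: for every configuration x, P(x) = ∏_{i : Fin n} P(x_i | x_{pa(i)}). -/
open Finset

/-- The marginal probability `P_S(x)`: the sum of `P` over all configurations
agreeing with `x` on the index set `S`. -/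
noncomputable def margProb {n : ℕ} {α : Fin n → Type*}
    [∀ i, Fintype (α i)] [∀ i, DecidableEq (α i)]
    (P : (∀ i, α i) → ℝ) (S : Finset (Fin n)) (x : ∀ i, α i) : ℝ :=
  ∑ y : ∀ i, α i, if ∀ j ∈ S, y j = x j then P y else 0

/-- The conditional probability `P(x_i | x_S) = P_{S ∪ {i}}(x) / P_S(x)`. -/
noncomputable def condProb {n : ℕ} {α : Fin n → Type*}
    [∀ i, Fintype (α i)] [∀ i, DecidableEq (α i)]
    (P : (∀ i, α i) → ℝ) (i : Fin n) (S : Finset (Fin n)) (x : ∀ i, α i) : ℝ :=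
  margProb P (insert i S) x / margProb P S x

lemma marg_pos {n : ℕ} {α : Fin n → Type*}
    [∀ i, Fintype (α i)] [∀ i, DecidableEq (α i)]
    (P : (∀ i, α i) → ℝ) (hpos : ∀ x, 0 < P x) (S : Finset (Fin n)) (x : ∀ i, α i) :
    0 < margProb P S x := by
  unfold margProb
  apply Finset.sum_pos'
  · intro y _
    split_ifs with h
    · exact (hpos y).le
    · exact le_rfl
  · exact ⟨x, Finset.mem_univ x, by simp [hpos x]⟩

lemma marg_univ {n : ℕ} {α : Fin n → Type*}
    [∀ i, Fintype (α i)] [∀ i, DecidableEq (α i)]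
    (P : (∀ i, α i) → ℝ) (x : ∀ i, α i) :
    margProb P Finset.univ x = P x := by
  unfold margProb
  rw [Finset.sum_eq_single x]
  · simp
  · intro y _ hy
    rw [if_neg]
    intro h
    exact hy (funext fun j => h j (Finset.mem_univ j))
  · intro h
    exact absurd (Finset.mem_univ x) h

lemma tele (F : ℕ → ℝ) (hF : ∀ k, F k ≠ 0) (n : ℕ) :
    ∏ i ∈ Finset.range n, F (i + 1) / F i = F n / F 0 := by
  induction n with
  | zero => simp [div_self (hF 0)]
  | succ n ih =>
      rw [Finset.prod_range_succ, ih, div_mul_div_comm, mul_comm (F 0) (F n),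
        mul_div_mul_left _ _ (hF n)]

/-- Factorization Theorem: if the joint distribution `P` satisfies the local Markov
conditions of the DAG given by the parent assignment `pa` (each variable is
conditionally independent of its remaining predecessors given its parents), then
`P` factorizes as `P(x) = ∏ i, P(x_i | x_{pa i})`. -/
theorem factorization_theorem {n : ℕ} (hn : 1 ≤ n) {α : Fin n → Type*}
    [∀ i, Fintype (α i)] [∀ i, Nonempty (α i)] [∀ i, DecidableEq (α i)]
    (P : (∀ i, α i) → ℝ)
    (hpos : ∀ x, 0 < P x) (hsum : ∑ x, P x = 1)
    (pa : Fin n → Finset (Fin n)) (hpa : ∀ i, ∀ j ∈ pa i, j < i)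
    (hmarkov : ∀ (i : Fin n) (x : ∀ i, α i),
      condProb P i (Finset.Iio i) x = condProb P i (pa i) x) :
    ∀ x : ∀ i, α i, P x = ∏ i, condProb P i (pa i) x := by
  intro x
  set F : ℕ → ℝ := fun k => margProb P (Finset.univ.filter fun j : Fin n => (j : ℕ) < k) x
    with hFdef
  have hFpos : ∀ k, 0 < F k := fun k => marg_pos P hpos _ x
  have key : ∀ i : Fin n, condProb P i (Finset.Iio i) x = F ((i : ℕ) + 1) / F (i : ℕ) := by
    intro i
    unfold condProb
    have h1 : insert i (Finset.Iio i) =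
        (Finset.univ.filter fun j : Fin n => (j : ℕ) < (i : ℕ) + 1) := by
      ext j
      simp only [Finset.mem_insert, Finset.mem_Iio, Finset.mem_filter,
        Finset.mem_univ, true_and, Fin.lt_def, Fin.ext_iff]
      omega
    have h2 : (Finset.Iio i) = (Finset.univ.filter fun j : Fin n => (j : ℕ) < (i : ℕ)) := by
      ext j
      simp only [Finset.mem_Iio, Finset.mem_filter, Finset.mem_univ, true_and, Fin.lt_def]
    rw [h1, h2]
  have hF0 : F 0 = 1 := by
    have : (Finset.univ.filter fun j : Fin n => (j : ℕ) < 0) = (∅ : Finset (Fin n)) := by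
      ext j; simp
    show margProb P _ x = 1
    rw [this]
    unfold margProb
    simpa using hsum
  have hFn : F n = P x := by
    have : (Finset.univ.filter fun j : Fin n => (j : ℕ) < n) = Finset.univ := by
      ext j; simp [j.isLt]
    show margProb P _ x = P x
    rw [this]
    exact marg_univ P x
  have prod1 : ∏ i : Fin n, condProb P i (Finset.Iio i) x = F n / F 0 := by
    calc ∏ i : Fin n, condProb P i (Finset.Iio i) x
        = ∏ i : Fin n, F ((i : ℕ) + 1) / F (i : ℕ) :=
          Finset.prod_congr rfl fun i _ => key i
      _ = ∏ i ∈ Finset.range n, F (i + 1) / F i :=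
          Fin.prod_univ_eq_prod_range (fun k => F (k + 1) / F k) n
      _ = F n / F 0 := tele F (fun k => (hFpos k).ne') n
  have : ∏ i : Fin n, condProb P i (Finset.Iio i) x = P x := by
    rw [prod1, hF0, hFn, div_one]
  rw [← this]
  exact Finset.prod_congr rfl fun i _ => hmarkov i x
end

section
/- Converse of the Factorization Theorem: Suppose for each i : Fin n there is a conditional kernel f_i assigning to each value v ∈ α i and each configuration u of the parents pa(i) a nonnegative real f_i(v, u), with Σ_{v ∈ α i} f_i(v, u) = 1 for every u, and suppose the joint distribution satisfies P(x) = ∏_i f_i(x_i, x_{pa(i)}) for every configuration x (with P x > 0 everywhere). Then for every i and every configuration x one has P(x_i | x_{pa(i)}) = f_i(x_i, x_{pa(i)}) and moreover P(x_i | x_{{0,…,i−1}}) = P(x_i | x_{pa(i)}); that is, each variable is conditionally independent of its remaining predecessors given its parents, so the local Markov assumptions of the DAG hold for P. -/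
/-!
Write `P` as the product of the kernels `f j (x j) (x|pa j)`. Summing out the largest remaining
variable removes its kernel: the kernel sums to one, and no kernel of a smaller variable mentions
that variable. Hence, with the variables `≥ i` pinned to `x`, the marginal of `P` on any
`S ⊆ {0, …, i-1}` is a marginal of the product of the kernels below `i`, and adding `i` to `S`
multiplies it by `f i (x i) (x|pa i)` once `pa i ⊆ S`. So `P(x_i | x_S) = f i (x i) (x|pa i)` for
every `pa i ⊆ S ⊆ {0, …, i-1}`; take `S = pa i` and `S = {0, …, i-1}`.
-/

open Finset

section Kernels

variable {n : ℕ} {α : Fin n → Type*} {pa : Fin n → Finset (Fin n)}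
  (f : ∀ i : Fin n, α i → (∀ j : {j : Fin n // j ∈ pa i}, α j.1) → ℝ)

def kernelProd (T : Finset (Fin n)) (y : ∀ i, α i) : ℝ :=
  ∏ j ∈ T, f j (y j) (fun l => y l.1)

variable {f}

lemma kernelProd_eq_mul_erase {T : Finset (Fin n)} {k : Fin n} (hkT : k ∈ T) (y : ∀ i, α i) :
    kernelProd f T y = f k (y k) (fun l => y l.1) * kernelProd f (T.erase k) y :=
  (mul_prod_erase T _ hkT).symm

variable [∀ i, Fintype (α i)]

lemma sum_kernelProd_update {T : Finset (Fin n)} {k : Fin n} (hkT : k ∈ T)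
    (hk : ∀ j ∈ T, k ∉ pa j) (hf1 : ∀ u, ∑ v : α k, f k v u = 1) (y : ∀ i, α i) :
    ∑ v : α k, kernelProd f T (Function.update y k v) = kernelProd f (T.erase k) y := by
  have hpa_update : ∀ j ∈ T, ∀ v : α k,
      (fun l : {l // l ∈ pa j} => Function.update y k v l.1) = fun l : {l // l ∈ pa j} => y l.1 :=
    fun j hj v => funext fun l => Function.update_of_ne (ne_of_mem_of_not_mem l.2 (hk j hj)) v y
  have hfactor : ∀ v : α k, kernelProd f T (Function.update y k v)
      = f k v (fun l => y l.1) * kernelProd f (T.erase k) y := by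
    intro v
    rw [kernelProd_eq_mul_erase hkT, Function.update_self, hpa_update k hkT v]
    congr 1
    refine prod_congr rfl fun j hj => ?_
    rw [Function.update_of_ne (ne_of_mem_erase hj), hpa_update j (mem_of_mem_erase hj) v]
  simp only [hfactor, ← sum_mul, hf1, one_mul]

variable [∀ i, DecidableEq (α i)]

lemma margProb_pos {P : (∀ i, α i) → ℝ} (hpos : ∀ x, 0 < P x) (S : Finset (Fin n))
    (x : ∀ i, α i) : 0 < margProb P S x :=
  sum_pos' (fun y _ => by split_ifs <;> simp [(hpos y).le])
    ⟨x, mem_univ x, by simp [hpos x]⟩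

lemma margProb_mul_left_of_eqOn (h g : (∀ i, α i) → ℝ) {C : Finset (Fin n)} {x : ∀ i, α i}
    (hh : ∀ y, (∀ j ∈ C, y j = x j) → h y = h x) :
    margProb (fun y => h y * g y) C x = h x * margProb g C x := by
  rw [margProb, margProb, mul_sum]
  refine sum_congr rfl fun y _ => ?_
  split_ifs with hy
  · rw [hh y hy]
  · rw [mul_zero]

lemma margProb_eq_margProb_sum_update (g : (∀ i, α i) → ℝ) {S : Finset (Fin n)} {k : Fin n}
    (hk : k ∉ S) (x : ∀ i, α i) :
    margProb g S x = margProb (fun y => ∑ v : α k, g (Function.update y k v)) (insert k S) x := by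
  have hinv : Function.Involutive fun p : (∀ i, α i) × α k => (Function.update p.1 k p.2, p.1 k) :=
    fun p => by simp
  have hS : ∀ y v, (∀ j ∈ S, Function.update y k v j = x j) ↔ ∀ j ∈ S, y j = x j :=
    fun y v => forall₂_congr fun j hj => by rw [Function.update_of_ne (ne_of_mem_of_not_mem hj hk)]
  calc margProb g S x
      = ∑ p : (∀ i, α i) × α k, if p.2 = x k ∧ ∀ j ∈ S, p.1 j = x j then g p.1 else 0 := by
        simp [margProb, Fintype.sum_prod_type, ite_and]
    _ = ∑ p : (∀ i, α i) × α k,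
          if p.1 k = x k ∧ ∀ j ∈ S, p.1 j = x j then g (Function.update p.1 k p.2) else 0 :=
        Fintype.sum_bijective _ hinv.bijective _ _ fun p => by simp [hS]
    _ = _ := by
        rw [margProb, Fintype.sum_prod_type]
        refine sum_congr rfl fun y _ => ?_
        simp only [mem_insert, forall_eq_or_imp]
        split_ifs <;> simp

lemma margProb_kernelProd_eq_erase {T S : Finset (Fin n)} {k : Fin n} (hkT : k ∈ T)
    (hk : ∀ j ∈ T, k ∉ pa j) (hf1 : ∀ u, ∑ v : α k, f k v u = 1) (hkS : k ∉ S)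
    (x : ∀ i, α i) :
    margProb (kernelProd f T) S x = margProb (kernelProd f (T.erase k)) (insert k S) x := by
  rw [margProb_eq_margProb_sum_update _ hkS]
  simp only [sum_kernelProd_update hkT hk hf1]

lemma margProb_kernelProd_univ (hpa : ∀ i, ∀ j ∈ pa i, j < i)
    (hf1 : ∀ i u, ∑ v : α i, f i v u = 1) {U : Finset (Fin n)}
    (hU : IsUpperSet (U : Set (Fin n))) {S : Finset (Fin n)} (hSU : Disjoint S U)
    (x : ∀ i, α i) :
    margProb (kernelProd f univ) S x = margProb (kernelProd f Uᶜ) (S ∪ U) x := by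
  induction U using Finset.induction_on_min generalizing S with
  | empty => simp
  | insert a U ha_lt ih =>
    have haU : a ∉ U := fun h => lt_irrefl a (ha_lt a h)
    have hU' : IsUpperSet (U : Set (Fin n)) := fun i j hij hi =>
      (mem_insert.1 (hU hij (mem_insert_of_mem hi))).resolve_left ((ha_lt i hi).trans_le hij).ne'
    have ha_sink : ∀ j ∈ Uᶜ, a ∉ pa j := fun j hj hja =>
      mem_compl.1 hj <| (mem_insert.1 (hU (hpa j a hja).le (mem_insert_self a U))).resolve_left
        (hpa j a hja).ne'
    have haS : a ∉ S := disjoint_right.1 hSU (mem_insert_self a U)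
    rw [ih hU' (disjoint_of_subset_right (subset_insert a U) hSU),
      margProb_kernelProd_eq_erase (mem_compl.2 haU) ha_sink (hf1 a) (notMem_union.2 ⟨haS, haU⟩),
      compl_insert, ← union_insert]

lemma margProb_kernelProd_univ_insert (hpa : ∀ i, ∀ j ∈ pa i, j < i)
    (hf1 : ∀ i u, ∑ v : α i, f i v u = 1) {i : Fin n} {S : Finset (Fin n)} (hpaS : pa i ⊆ S)
    (hSi : S ⊆ Iio i) (x : ∀ i, α i) :
    margProb (kernelProd f univ) (insert i S) x
      = f i (x i) (fun j => x j.1) * margProb (kernelProd f univ) S x := by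
  have hSi' : Disjoint S (Ici i) := disjoint_left.2 fun j hj => by simpa using hSi hj
  rw [margProb_kernelProd_univ hpa hf1 (by simpa using isUpperSet_Ioi i)
      (disjoint_insert_left.2 ⟨by simp, disjoint_of_subset_right Ioi_subset_Ici_self hSi'⟩),
    margProb_kernelProd_univ hpa hf1 (by simpa using isUpperSet_Ici i) hSi',
    ← Ioi_insert, compl_insert, union_insert, insert_union,
    funext (kernelProd_eq_mul_erase (f := f) (by simp : i ∈ (Ioi i)ᶜ))]
  refine margProb_mul_left_of_eqOn _ _ fun y hy => ?_
  have hpinned : ∀ j ∈ insert i (pa i), y j = x j := fun j hj =>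
    hy j (insert_subset_insert i (hpaS.trans subset_union_left) hj)
  rw [hpinned i (mem_insert_self i _)]
  exact congrArg _ (funext fun l => hpinned l (mem_insert_of_mem l.2))

lemma condProb_kernelProd_univ (hpa : ∀ i, ∀ j ∈ pa i, j < i)
    (hf1 : ∀ i u, ∑ v : α i, f i v u = 1) (hpos : ∀ y, 0 < kernelProd f univ y) {i : Fin n}
    {S : Finset (Fin n)} (hpaS : pa i ⊆ S) (hSi : S ⊆ Iio i) (x : ∀ i, α i) :
    condProb (kernelProd f univ) i S x = f i (x i) (fun j => x j.1) := by
  rw [condProb, margProb_kernelProd_univ_insert hpa hf1 hpaS hSi,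
    mul_div_cancel_right₀ _ (margProb_pos hpos S x).ne']

end Kernels

theorem factorization_theorem_converse_general {n : ℕ} {α : Fin n → Type*}
    [∀ i, Fintype (α i)] [∀ i, DecidableEq (α i)]
    (P : (∀ i, α i) → ℝ)
    (hpos : ∀ x, 0 < P x)
    (pa : Fin n → Finset (Fin n)) (hpa : ∀ i, ∀ j ∈ pa i, j < i)
    (f : ∀ i : Fin n, α i → (∀ j : {j : Fin n // j ∈ pa i}, α j.1) → ℝ)
    (hf1 : ∀ (i : Fin n) (u : ∀ j : {j : Fin n // j ∈ pa i}, α j.1),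
      ∑ v : α i, f i v u = 1)
    (hfact : ∀ x : ∀ i, α i, P x = ∏ i, f i (x i) (fun j => x j.1)) :
    ∀ (i : Fin n) (x : ∀ i, α i),
      condProb P i (pa i) x = f i (x i) (fun j => x j.1) ∧
      condProb P i (Finset.Iio i) x = condProb P i (pa i) x := by
  obtain rfl : P = kernelProd f univ := funext hfact
  intro i x
  have hpa_Iio : pa i ⊆ Iio i := fun j hj => mem_Iio.2 (hpa i j hj)
  have hparents := condProb_kernelProd_univ hpa hf1 hpos subset_rfl hpa_Iio x
  exact ⟨hparents, (condProb_kernelProd_univ hpa hf1 hpos hpa_Iio subset_rfl x).trans hparents.symm⟩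

/-- Converse of the Factorization Theorem: if `P (x) = ∏ i, f i (x i) (x|pa i)` for
conditional kernels `f i` (nonnegative, summing to one in the first argument),
then `P(x_i | x_{pa i}) = f i (x i) (x|pa i)` and each variable is conditionally
independent of its remaining predecessors given its parents, i.e. the local
Markov assumptions hold for `P`. -/
theorem factorization_theorem_converse {n : ℕ} (hn : 1 ≤ n) {α : Fin n → Type*}
    [∀ i, Fintype (α i)] [∀ i, Nonempty (α i)] [∀ i, DecidableEq (α i)]
    (P : (∀ i, α i) → ℝ)
    (hpos : ∀ x, 0 < P x) (hsum : ∑ x, P x = 1)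
    (pa : Fin n → Finset (Fin n)) (hpa : ∀ i, ∀ j ∈ pa i, j < i)
    (f : ∀ i : Fin n, α i → (∀ j : {j : Fin n // j ∈ pa i}, α j.1) → ℝ)
    (hf0 : ∀ (i : Fin n) (v : α i) (u : ∀ j : {j : Fin n // j ∈ pa i}, α j.1),
      0 ≤ f i v u)
    (hf1 : ∀ (i : Fin n) (u : ∀ j : {j : Fin n // j ∈ pa i}, α j.1),
      ∑ v : α i, f i v u = 1)
    (hfact : ∀ x : ∀ i, α i, P x = ∏ i, f i (x i) (fun j => x j.1)) :
    ∀ (i : Fin n) (x : ∀ i, α i),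
      condProb P i (pa i) x = f i (x i) (fun j => x j.1) ∧
      condProb P i (Finset.Iio i) x = condProb P i (pa i) x :=
  factorization_theorem_converse_general P hpos pa hpa f hf1 hfact
end

section
/- Marginal likelihood of counts under a Dirichlet prior (BDe score component): for every a : Fin k → ℝ with a i > 0 for all i and every count vector N : Fin k → ℕ, the Dirichlet-type integrals satisfy I(fun i => a i + N i) = I(a) · (Γ(Σ_i a i) / Γ(Σ_i a i + Σ_i N i)) · ∏_i (Γ(a i + N i) / Γ(a i)), where Γ is the real Gamma function. Equivalently, the probability of observing a sequence of outcomes with counts N under a Dirichlet prior with hyperparameters a equals Γ(Σ a_i)/Γ(Σ(a_i + N_i)) · ∏_i Γ(a_i + N_i)/Γ(a_i). -/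
/-!
Integrating out the first coordinate `t ∈ (0, c)`, `c = 1 - ∑ φⱼ`, of the simplex is a scaled
Beta integral `∫₀ᶜ t^(α₀-1) (c-t)^(β-1) dt = c^(α₀+β-1) B(α₀, β)`. It turns the Dirichlet kernel
with parameters `(α, β)` into `B(α₀, β)` times the kernel with parameters `(tail α, α₀ + β)` one
dimension lower, so by induction the Dirichlet integral is `∏ Γ(aᵢ) / Γ(∑ aᵢ)`, and the theorem
is the quotient of two instances of this formula. Working with lower Lebesgue integrals removes
all integrability side conditions until the very end.
-/

open Finset MeasureTheory Real

/-- The Dirichlet-type integral `∫_Δ ∏ θᵢ^(aᵢ-1) · (1-∑θᵢ)^(a_last - 1)` over the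
open simplex `Δ = {θ : ℝ^(k-1) | θᵢ > 0, ∑ θᵢ < 1}`, for `k = m + 2` outcomes. -/
noncomputable def dirichletIntegral {m : ℕ} (a : Fin (m + 2) → ℝ) : ℝ :=
  ∫ θ in {θ : Fin (m + 1) → ℝ | (∀ i, 0 < θ i) ∧ ∑ i, θ i < 1},
    (∏ i : Fin (m + 1), θ i ^ (a i.castSucc - 1)) *
      (1 - ∑ i, θ i) ^ (a (Fin.last (m + 1)) - 1)

open ProbabilityTheory

lemma lintegral_Ioo_rpow_mul_one_sub_rpow {b d : ℝ} (hb : 0 < b) (hd : 0 < d) :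
    ∫⁻ x in Set.Ioo 0 1, ENNReal.ofReal (x ^ (b - 1) * (1 - x) ^ (d - 1)) =
      ENNReal.ofReal (beta b d) := by
  have h := lintegral_betaPDF_eq_one hb hd
  simp_rw [lintegral_betaPDF, mul_assoc,
    ENNReal.ofReal_mul (one_div_pos.2 (beta_pos hb hd)).le] at h
  rw [lintegral_const_mul _ (by fun_prop), mul_comm] at h
  rw [ENNReal.eq_inv_of_mul_eq_one_left h, one_div, ENNReal.ofReal_inv_of_pos (beta_pos hb hd),
    inv_inv]

lemma lintegral_Ioo_rpow_mul_sub_rpow {b d c : ℝ} (hb : 0 < b) (hd : 0 < d) (hc : 0 < c) :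
    ∫⁻ t in Set.Ioo 0 c, ENNReal.ofReal (t ^ (b - 1) * (c - t) ^ (d - 1)) =
      ENNReal.ofReal (c ^ (b + d - 1) * beta b d) := by
  have himage : (c * ·) '' Set.Ioo 0 1 = Set.Ioo 0 c := by
    rw [Set.image_mul_left_Ioo hc, mul_zero, mul_one]
  rw [← himage, lintegral_image_eq_lintegral_abs_deriv_mul measurableSet_Ioo
      (fun x _ => (hasDerivAt_const_mul c).hasDerivWithinAt) (mul_right_injective₀ hc.ne').injOn]
  have hscale : ∀ x ∈ Set.Ioo (0 : ℝ) 1,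
      ENNReal.ofReal |c| * ENNReal.ofReal ((c * x) ^ (b - 1) * (c - c * x) ^ (d - 1)) =
        ENNReal.ofReal (c ^ (b + d - 1)) * ENNReal.ofReal (x ^ (b - 1) * (1 - x) ^ (d - 1)) := by
    intro x hx
    rw [← ENNReal.ofReal_mul (abs_nonneg c), ← ENNReal.ofReal_mul (by positivity)]
    congr 1
    rw [abs_of_pos hc, show c - c * x = c * (1 - x) by ring, mul_rpow hc.le hx.1.le,
      mul_rpow hc.le (sub_nonneg.2 hx.2.le), show b + d - 1 = 1 + (b - 1) + (d - 1) by ring,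
      rpow_add hc, rpow_add hc, rpow_one]
    ring
  rw [setLIntegral_congr_fun measurableSet_Ioo hscale, lintegral_const_mul _ (by fun_prop),
    lintegral_Ioo_rpow_mul_one_sub_rpow hb hd, ← ENNReal.ofReal_mul (by positivity)]

def openSimplex (n : ℕ) : Set (Fin n → ℝ) := {θ | (∀ i, 0 < θ i) ∧ ∑ i, θ i < 1}

/-- The unnormalised Dirichlet density with parameters `(α, β)` in the coordinates `θ`, the
missing last coordinate being `1 - ∑ θᵢ`; `dirichletIntegral a` is its integral over
`openSimplex (m + 1)`. -/
noncomputable def dirichletKernel {n : ℕ} (α : Fin n → ℝ) (β : ℝ) (θ : Fin n → ℝ) : ℝ :=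
  (∏ i, θ i ^ (α i - 1)) * (1 - ∑ i, θ i) ^ (β - 1)

lemma measurableSet_openSimplex (n : ℕ) : MeasurableSet (openSimplex n) := by
  simp only [openSimplex, Set.ofPred_and, Set.ofPred_forall]
  exact .inter (.iInter fun i => measurableSet_lt measurable_const (measurable_pi_apply i))
    (measurableSet_lt (by fun_prop) measurable_const)

lemma cons_mem_openSimplex_iff {n : ℕ} {t : ℝ} {φ : Fin n → ℝ} :
    (Fin.cons t φ : Fin (n + 1) → ℝ) ∈ openSimplex (n + 1) ↔
      φ ∈ openSimplex n ∧ t ∈ Set.Ioo 0 (1 - ∑ j, φ j) := by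
  simp only [openSimplex, Set.mem_ofPred_eq, Fin.forall_fin_succ, Fin.sum_univ_succ, Fin.cons_zero,
    Fin.cons_succ, Set.mem_Ioo, lt_sub_iff_add_lt]
  constructor
  · rintro ⟨⟨ht, hφ⟩, hsum⟩
    exact ⟨⟨hφ, by linarith⟩, ht, hsum⟩
  · rintro ⟨⟨hφ, -⟩, ht, hsum⟩
    exact ⟨⟨ht, hφ⟩, hsum⟩

lemma dirichletKernel_nonneg {n : ℕ} (α : Fin n → ℝ) (β : ℝ) {θ : Fin n → ℝ}
    (hθ : θ ∈ openSimplex n) : 0 ≤ dirichletKernel α β θ :=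
  mul_nonneg (prod_nonneg fun i _ => rpow_nonneg (hθ.1 i).le _)
    (rpow_nonneg (sub_nonneg.2 hθ.2.le) _)

lemma dirichletKernel_cons {n : ℕ} (α : Fin (n + 1) → ℝ) (β t : ℝ) (φ : Fin n → ℝ) :
    dirichletKernel α β (Fin.cons t φ) =
      (∏ j, φ j ^ (α j.succ - 1)) * (t ^ (α 0 - 1) * (1 - ∑ j, φ j - t) ^ (β - 1)) := by
  simp only [dirichletKernel, Fin.prod_univ_succ, Fin.sum_univ_succ, Fin.cons_zero, Fin.cons_succ,
    sub_sub, add_comm t]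
  ring

lemma indicator_openSimplex_cons {n : ℕ} (F : (Fin (n + 1) → ℝ) → ENNReal) (t : ℝ)
    (φ : Fin n → ℝ) :
    (openSimplex (n + 1)).indicator F (Fin.cons t φ) =
      (openSimplex n).indicator
        (fun φ => (Set.Ioo 0 (1 - ∑ j, φ j)).indicator (fun t => F (Fin.cons t φ)) t) φ := by
  classical
  simp only [Set.indicator_apply, cons_mem_openSimplex_iff, ite_and]

lemma lintegral_openSimplex_succ {n : ℕ} {F : (Fin (n + 1) → ℝ) → ENNReal} (hF : Measurable F) :
    ∫⁻ θ in openSimplex (n + 1), F θ =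
      ∫⁻ φ in openSimplex n, ∫⁻ t in Set.Ioo 0 (1 - ∑ j, φ j), F (Fin.cons t φ) := by
  let e := MeasurableEquiv.piFinSuccAbove (fun _ : Fin (n + 1) => ℝ) 0
  have he : ⇑e.symm = fun p : ℝ × (Fin n → ℝ) => (Fin.cons p.1 p.2 : Fin (n + 1) → ℝ) :=
    funext fun p => Fin.insertNth_zero' p.1 p.2
  have hmeas : Measurable ((openSimplex (n + 1)).indicator F ∘ fun p : ℝ × (Fin n → ℝ) =>
      (Fin.cons p.1 p.2 : Fin (n + 1) → ℝ)) :=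
    he ▸ (hF.indicator (measurableSet_openSimplex _)).comp e.symm.measurable
  have hfiber : ∀ φ : Fin n → ℝ, ∫⁻ t, (openSimplex (n + 1)).indicator F (Fin.cons t φ) =
      (openSimplex n).indicator
        (fun φ => ∫⁻ t in Set.Ioo 0 (1 - ∑ j, φ j), F (Fin.cons t φ)) φ := by
    intro φ
    by_cases hφ : φ ∈ openSimplex n
    · simp only [indicator_openSimplex_cons, Set.indicator_of_mem hφ,
        lintegral_indicator measurableSet_Ioo]
    · simp only [indicator_openSimplex_cons, Set.indicator_of_notMem hφ, lintegral_zero]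
  rw [← lintegral_indicator (measurableSet_openSimplex _),
    ← (volume_preserving_piFinSuccAbove (fun _ : Fin (n + 1) => ℝ) 0).symm.lintegral_comp_emb
      e.symm.measurableEmbedding, he, Measure.volume_eq_prod]
  rw [lintegral_prod_symm' (fun p => (openSimplex (n + 1)).indicator F (Fin.cons p.1 p.2)) hmeas]
  simp only [hfiber]
  rw [lintegral_indicator (measurableSet_openSimplex _)]

lemma lintegral_Ioo_dirichletKernel_cons {n : ℕ} {α : Fin (n + 1) → ℝ} {β : ℝ} (hα : 0 < α 0)
    (hβ : 0 < β) {φ : Fin n → ℝ} (hφ : φ ∈ openSimplex n) :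
    ∫⁻ t in Set.Ioo 0 (1 - ∑ j, φ j), ENNReal.ofReal (dirichletKernel α β (Fin.cons t φ)) =
      ENNReal.ofReal (beta (α 0) β * dirichletKernel (Fin.tail α) (α 0 + β) φ) := by
  have hprod : 0 ≤ ∏ j, φ j ^ (α j.succ - 1) := prod_nonneg fun j _ => rpow_nonneg (hφ.1 j).le _
  simp_rw [dirichletKernel_cons, ENNReal.ofReal_mul hprod]
  rw [lintegral_const_mul _ (by fun_prop), lintegral_Ioo_rpow_mul_sub_rpow hα hβ
    (sub_pos.2 hφ.2), ← ENNReal.ofReal_mul hprod, dirichletKernel]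
  congr 1
  simp only [Fin.tail]
  ring

theorem lintegral_openSimplex_dirichletKernel {n : ℕ} (α : Fin n → ℝ) (β : ℝ)
    (hα : ∀ i, 0 < α i) (hβ : 0 < β) :
    ∫⁻ θ in openSimplex n, ENNReal.ofReal (dirichletKernel α β θ) =
      ENNReal.ofReal ((∏ i, Gamma (α i)) * Gamma β / Gamma (∑ i, α i + β)) := by
  induction n generalizing β with
  | zero =>
    have huniv : openSimplex 0 = Set.univ := by simp [openSimplex]
    simp [huniv, dirichletKernel, (Gamma_pos_of_pos hβ).ne',
      Measure.volume_pi_eq_dirac (α := fun _ : Fin 0 => ℝ)]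
  | succ n ih =>
    rw [lintegral_openSimplex_succ (by unfold dirichletKernel; fun_prop),
      setLIntegral_congr_fun (measurableSet_openSimplex n)
        fun φ hφ => lintegral_Ioo_dirichletKernel_cons (hα 0) hβ hφ]
    simp_rw [ENNReal.ofReal_mul (beta_pos (hα 0) hβ).le]
    rw [lintegral_const_mul _ (by unfold dirichletKernel; fun_prop),
      ih (Fin.tail α) _ (fun i => hα i.succ) (add_pos (hα 0) hβ),
      ← ENNReal.ofReal_mul (beta_pos (hα 0) hβ).le]
    have hΓ : Gamma (α 0 + β) ≠ 0 := (Gamma_pos_of_pos (add_pos (hα 0) hβ)).ne'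
    rw [Fin.prod_univ_succ, Fin.sum_univ_succ, beta, add_assoc, add_left_comm]
    congr 1
    simp only [Fin.tail]
    field_simp

theorem integral_openSimplex_dirichletKernel {n : ℕ} (α : Fin n → ℝ) (β : ℝ)
    (hα : ∀ i, 0 < α i) (hβ : 0 < β) :
    ∫ θ in openSimplex n, dirichletKernel α β θ =
      (∏ i, Gamma (α i)) * Gamma β / Gamma (∑ i, α i + β) := by
  rw [integral_eq_lintegral_of_nonneg_ae
      ((ae_restrict_iff' (measurableSet_openSimplex n)).2
        (.of_forall fun _ => dirichletKernel_nonneg α β))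
      (by unfold dirichletKernel; fun_prop),
    lintegral_openSimplex_dirichletKernel α β hα hβ, ENNReal.toReal_ofReal]
  have hsum : 0 < ∑ i, α i + β := add_pos_of_nonneg_of_pos (sum_nonneg fun i _ => (hα i).le) hβ
  exact div_nonneg (mul_nonneg (prod_nonneg fun i _ => (Gamma_pos_of_pos (hα i)).le)
    (Gamma_pos_of_pos hβ).le) (Gamma_pos_of_pos hsum).le

theorem dirichletIntegral_eq_prod_Gamma_div {m : ℕ} (a : Fin (m + 2) → ℝ) (ha : ∀ i, 0 < a i) :
    dirichletIntegral a = (∏ i, Gamma (a i)) / Gamma (∑ i, a i) := by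
  rw [Fin.prod_univ_castSucc, Fin.sum_univ_castSucc]
  exact integral_openSimplex_dirichletKernel _ _ (fun i => ha _) (ha _)

/-- Marginal likelihood of counts under a Dirichlet prior (BDe score component). -/
theorem dirichlet_marginal_likelihood {m : ℕ}
    (a : Fin (m + 2) → ℝ) (ha : ∀ i, 0 < a i) (N : Fin (m + 2) → ℕ) :
    dirichletIntegral (fun i => a i + (N i : ℝ)) =
      dirichletIntegral a *
        (Real.Gamma (∑ i, a i) / Real.Gamma ((∑ i, a i) + ∑ i, (N i : ℝ))) *
        ∏ i, (Real.Gamma (a i + (N i : ℝ)) / Real.Gamma (a i)) := by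
  have haN : ∀ i, 0 < a i + N i := fun i => add_pos_of_pos_of_nonneg (ha i) (Nat.cast_nonneg _)
  have hsum : 0 < ∑ i, a i := sum_pos (fun i _ => ha i) univ_nonempty
  have hΓa : Gamma (∑ i, a i) ≠ 0 := (Gamma_pos_of_pos hsum).ne'
  have hΓaN : Gamma (∑ i, a i + ∑ i, (N i : ℝ)) ≠ 0 :=
    (Gamma_pos_of_pos (add_pos_of_pos_of_nonneg hsum (by positivity))).ne'
  have hΓprod : ∏ i, Gamma (a i) ≠ 0 := prod_ne_zero_iff.2 fun i _ => (Gamma_pos_of_pos (ha i)).ne'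
  rw [dirichletIntegral_eq_prod_Gamma_div _ haN, dirichletIntegral_eq_prod_Gamma_div a ha,
    sum_add_distrib, prod_div_distrib]
  field_simp
end

section
/- Integrating a zero-mean Gaussian density over an exponential prior on its variance scale yields a Laplace density: for all real λ > 0, ψ > 0 and all β ∈ ℝ, ∫_{θ ∈ (0,∞)} (2π θ ψ)^{−1/2} · exp(−β² / (2 θ ψ)) · (λ/2) · exp(−λ θ / 2) dθ = (1/2) · √(λ/ψ) · exp(−√(λ/ψ) · |β|). -/
open Real MeasureTheory Set

/-!
Substituting `θ = x²` turns the mixture into `∫₀^∞ exp (-a / x² - b x²) dx` with `a = β² / (2ψ)`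
and `b = λ / 2`. Completing the square, `a / x² + b x² = (√b x - √a / x)² + 2 √(a b)`, and for an
even integrand the Cauchy–Schlömilch substitution `u = √b x - √a / x` gives
`∫₀^∞ exp (-u²) dx = √π / (2 √b)`: the involution `x ↦ √a / (√b x)` of `(0, ∞)` reverses the
sign of `u`, so averaging the integral with its image under it produces the Jacobian `du / dx`.
-/

section CauchySchlomilch

variable {s c : ℝ}

lemma hasDerivAt_mul_sub_div {x : ℝ} (hx : x ≠ 0) :
    HasDerivAt (fun x => s * x - c / x) (s + c / x ^ 2) x := by
  have h : HasDerivAt (fun x => s * x - c * x⁻¹) (s * 1 - c * -(x ^ 2)⁻¹) x :=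
    ((hasDerivAt_id' x).const_mul s).sub ((hasDerivAt_inv hx).const_mul c)
  convert h using 1
  · simp only [div_eq_mul_inv]
  · ring

lemma strictMonoOn_mul_sub_div (hs : 0 < s) (hc : 0 ≤ c) :
    StrictMonoOn (fun x => s * x - c / x) (Ioi 0) := by
  intro x hx y hy hxy
  have := div_le_div_of_nonneg_left hc hx hxy.le
  dsimp only
  nlinarith

lemma image_mul_sub_div_Ioi (hs : 0 < s) (hc : 0 < c) :
    (fun x => s * x - c / x) '' Ioi 0 = univ := by
  refine eq_univ_of_forall fun w => ?_
  -- the positive root of `s x ^ 2 - w x - c`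
  set r := √(w ^ 2 + 4 * s * c)
  have hr : r ^ 2 = w ^ 2 + 4 * s * c := sq_sqrt (by positivity)
  have hwr : -w < r := by
    have := sqrt_lt_sqrt (sq_nonneg w) (lt_add_of_pos_right _ (by positivity : 0 < 4 * s * c))
    rw [sqrt_sq_eq_abs] at this
    exact (neg_le_abs w).trans_lt this
  refine ⟨(w + r) / (2 * s), div_pos (by linarith) (by positivity : (0 : ℝ) < 2 * s), ?_⟩
  have : w + r ≠ 0 := by linarith
  field_simp
  linear_combination hr

variable {E : Type*} [NormedAddCommGroup E] [NormedSpace ℝ E]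

lemma integral_eq_setIntegral_Ioi_smul_comp_mul_sub_div (hs : 0 < s) (hc : 0 < c) (g : ℝ → E) :
    ∫ w, g w = ∫ x in Ioi 0, (s + c / x ^ 2) • g (s * x - c / x) := by
  rw [← setIntegral_univ, ← image_mul_sub_div_Ioi hs hc,
    integral_image_eq_integral_abs_deriv_smul measurableSet_Ioi
      (fun x hx => (hasDerivAt_mul_sub_div (ne_of_gt hx)).hasDerivWithinAt)
      (strictMonoOn_mul_sub_div hs hc.le).injOn]
  exact setIntegral_congr_fun measurableSet_Ioi fun x (hx : 0 < x) => by
    rw [abs_of_pos (by positivity : 0 < s + c / x ^ 2)]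

lemma integrableOn_Ioi_smul_comp_mul_sub_div {g : ℝ → E} (hg : Integrable g)
    (hs : 0 < s) (hc : 0 < c) :
    IntegrableOn (fun x => (s + c / x ^ 2) • g (s * x - c / x)) (Ioi 0) := by
  have := (integrableOn_image_iff_integrableOn_abs_deriv_smul measurableSet_Ioi
    (fun x hx => (hasDerivAt_mul_sub_div (ne_of_gt hx)).hasDerivWithinAt)
    (strictMonoOn_mul_sub_div hs hc.le).injOn g).1
    (by rw [image_mul_sub_div_Ioi hs hc]; exact hg.integrableOn)
  exact this.congr_fun (fun x (hx : 0 < x) => by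
    simp only [abs_of_pos (by positivity : 0 < s + c / x ^ 2)]) measurableSet_Ioi

lemma integrableOn_Ioi_comp_mul_sub_div {g : ℝ → E} (hg : Integrable g)
    (hs : 0 < s) (hc : 0 < c) :
    IntegrableOn (fun x => g (s * x - c / x)) (Ioi 0) := by
  have hpos : ∀ x ∈ Ioi (0 : ℝ), 0 < s + c / x ^ 2 := fun x (hx : 0 < x) => by positivity
  refine IntegrableOn.congr_fun ((integrableOn_Ioi_smul_comp_mul_sub_div hg hs hc).bdd_smul s⁻¹
    (φ := fun x => (s + c / x ^ 2)⁻¹)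
    (by fun_prop : Measurable fun x : ℝ => (s + c / x ^ 2)⁻¹).aestronglyMeasurable ?_)
    (fun x hx => inv_smul_smul₀ (hpos x hx).ne' _) measurableSet_Ioi
  filter_upwards [ae_restrict_mem measurableSet_Ioi] with x hx
  rw [norm_inv, Real.norm_of_nonneg (hpos x hx).le]
  exact inv_anti₀ hs (le_add_of_nonneg_right (by positivity))

/-- The involution `x ↦ c / (s x)` of `(0, ∞)` turns `s x - c / x` into its negative. -/
lemma setIntegral_Ioi_comp_mul_sub_div_eq_smul {g : ℝ → E} (hg_even : ∀ w, g (-w) = g w)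
    (hs : 0 < s) (hc : 0 < c) :
    ∫ x in Ioi 0, g (s * x - c / x) = ∫ x in Ioi 0, (c / (s * x ^ 2)) • g (s * x - c / x) := by
  set φ := fun x : ℝ => c / s * x⁻¹
  have hφφ : ∀ x ∈ Ioi (0 : ℝ), φ (φ x) = x := fun x (hx : 0 < x) => by
    simp only [φ]; field_simp
  have hφ_maps : MapsTo φ (Ioi 0) (Ioi 0) := fun x (hx : 0 < x) => by
    simp only [φ, mem_Ioi]; positivity
  have hφ_image : φ '' Ioi 0 = Ioi 0 :=
    hφ_maps.image_subset.antisymm fun y hy => ⟨φ y, hφ_maps hy, hφφ y hy⟩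
  have hφ' : ∀ x ∈ Ioi (0 : ℝ), HasDerivWithinAt φ (c / s * -(x ^ 2)⁻¹) (Ioi 0) x :=
    fun x (hx : 0 < x) => ((hasDerivAt_inv hx.ne').const_mul (c / s)).hasDerivWithinAt
  conv_lhs => rw [← hφ_image]
  rw [integral_image_eq_integral_abs_deriv_smul measurableSet_Ioi hφ' (LeftInvOn.injOn hφφ)]
  refine setIntegral_congr_fun measurableSet_Ioi fun x (hx : 0 < x) => ?_
  have hneg : s * φ x - c / φ x = -(s * x - c / x) := by
    simp only [φ]; field_simp; ring
  rw [hneg, hg_even, abs_mul, abs_neg, abs_of_pos (by positivity : 0 < c / s),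
    abs_of_pos (by positivity : 0 < (x ^ 2)⁻¹)]
  field_simp

/-- The Cauchy–Schlömilch transformation. -/
theorem integral_Ioi_comp_mul_sub_div {g : ℝ → E} (hg : Integrable g)
    (hg_even : ∀ w, g (-w) = g w) (hs : 0 < s) (hc : 0 < c) :
    ∫ x in Ioi 0, g (s * x - c / x) = (2 * s)⁻¹ • ∫ w, g w := by
  set G := fun x => g (s * x - c / x)
  have hG : IntegrableOn G (Ioi 0) := integrableOn_Ioi_comp_mul_sub_div hg hs hc
  have hsG : IntegrableOn (fun x => (s + c / x ^ 2) • G x) (Ioi 0) :=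
    integrableOn_Ioi_smul_comp_mul_sub_div hg hs hc
  have hcG : IntegrableOn (fun x => (c / (s * x ^ 2)) • G x) (Ioi 0) := by
    refine IntegrableOn.congr_fun ((hsG.sub (hG.smul s)).smul s⁻¹)
      (fun x (hx : 0 < x) => ?_) measurableSet_Ioi
    simp only [Pi.smul_apply, Pi.sub_apply, ← sub_smul, smul_smul]
    congr 1
    field_simp
    ring
  have hsplit : ∀ x ∈ Ioi (0 : ℝ),
      (s + c / x ^ 2) • G x = s • G x + s • (c / (s * x ^ 2)) • G x :=
    fun x (hx : 0 < x) => by rw [smul_smul, ← add_smul]; field_simp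
  calc ∫ x in Ioi 0, G x
      = (2 * s)⁻¹ • (s • ∫ x in Ioi 0, G x) + (2 * s)⁻¹ • (s • ∫ x in Ioi 0, G x) := by
        rw [← smul_add, ← two_smul ℝ, smul_smul, smul_smul, mul_assoc,
          inv_mul_cancel₀ (by positivity), one_smul]
    _ = (2 * s)⁻¹ • ∫ w, g w := by
        rw [integral_eq_setIntegral_Ioi_smul_comp_mul_sub_div hs hc,
          setIntegral_congr_fun measurableSet_Ioi hsplit,
          integral_add (f := fun x => s • G x) (g := fun x => s • (c / (s * x ^ 2)) • G x)
            (hG.smul s) (hcG.smul s), integral_smul, integral_smul,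
          ← setIntegral_Ioi_comp_mul_sub_div_eq_smul hg_even hs hc, smul_add]

end CauchySchlomilch

theorem integral_Ioi_exp_neg_sq_mul_sub_div {s c : ℝ} (hs : 0 < s) (hc : 0 < c) :
    ∫ x in Ioi 0, exp (-(s * x - c / x) ^ 2) = √π / (2 * s) := by
  have hgauss := integral_gaussian 1
  simp only [neg_mul, one_mul, div_one] at hgauss
  rw [integral_Ioi_comp_mul_sub_div (g := fun w => exp (-w ^ 2))
    (by simpa using integrable_exp_neg_mul_sq one_pos) (fun w => by simp) hs hc, hgauss,
    smul_eq_mul, inv_mul_eq_div]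

theorem integral_Ioi_exp_neg_div_sq_sub_mul_sq {a b : ℝ} (ha : 0 ≤ a) (hb : 0 < b) :
    ∫ x in Ioi 0, exp (-(a / x ^ 2) - b * x ^ 2) = √(π / b) / 2 * exp (-(2 * √(a * b))) := by
  rcases ha.eq_or_lt with rfl | ha
  · simpa [neg_mul] using integral_gaussian_Ioi b
  have hsquare : ∀ x ∈ Ioi (0 : ℝ), exp (-(a / x ^ 2) - b * x ^ 2) =
      exp (-(2 * √(a * b))) * exp (-(√b * x - √a / x) ^ 2) := fun x (hx : 0 < x) => by
    rw [← exp_add, sqrt_mul ha.le]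
    congr 1
    field_simp
    linear_combination sq_sqrt ha.le + x ^ 4 * sq_sqrt hb.le
  rw [setIntegral_congr_fun measurableSet_Ioi hsquare, integral_const_mul,
    integral_Ioi_exp_neg_sq_mul_sub_div (sqrt_pos.2 hb) (sqrt_pos.2 ha), sqrt_div pi_pos.le]
  ring

theorem integral_Ioi_rpow_neg_half_mul_exp_neg_div_sub_mul {a b : ℝ} (ha : 0 ≤ a) (hb : 0 < b) :
    ∫ t in Ioi 0, t ^ (-(1 : ℝ) / 2) * exp (-(a / t) - b * t) =
      √(π / b) * exp (-(2 * √(a * b))) := by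
  rw [← integral_comp_rpow_Ioi_of_pos two_pos]
  have hsubst : ∀ x ∈ Ioi (0 : ℝ), ((2 : ℝ) * x ^ ((2 : ℝ) - 1)) •
      ((x ^ (2 : ℝ)) ^ (-(1 : ℝ) / 2) * exp (-(a / x ^ (2 : ℝ)) - b * x ^ (2 : ℝ))) =
      2 * exp (-(a / x ^ 2) - b * x ^ 2) := fun x (hx : 0 < x) => by
    rw [rpow_two, show (2 : ℝ) - 1 = 1 by norm_num, rpow_one, neg_div, rpow_neg (sq_nonneg x),
      ← sqrt_eq_rpow, sqrt_sq hx.le, smul_eq_mul]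
    field_simp
  rw [setIntegral_congr_fun measurableSet_Ioi hsubst, integral_const_mul,
    integral_Ioi_exp_neg_div_sq_sub_mul_sq ha hb]
  ring

/-- Integrating a zero-mean Gaussian density over an exponential prior on its
variance scale yields a Laplace density. -/
theorem gaussian_exponential_scale_mixture_is_laplace
    (lam ψ : ℝ) (hlam : 0 < lam) (hψ : 0 < ψ) (β : ℝ) :
    ∫ θ in Set.Ioi (0 : ℝ),
        (2 * π * θ * ψ) ^ (-(1 : ℝ) / 2) * Real.exp (-β ^ 2 / (2 * θ * ψ)) *
          ((lam / 2) * Real.exp (-lam * θ / 2)) =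
      (1 / 2) * Real.sqrt (lam / ψ) * Real.exp (-Real.sqrt (lam / ψ) * |β|) := by
  have hintegrand : ∀ θ ∈ Ioi (0 : ℝ),
      (2 * π * θ * ψ) ^ (-(1 : ℝ) / 2) * exp (-β ^ 2 / (2 * θ * ψ)) *
        ((lam / 2) * exp (-lam * θ / 2)) =
      (lam / 2 * (2 * π * ψ) ^ (-(1 : ℝ) / 2)) *
        (θ ^ (-(1 : ℝ) / 2) * exp (-(β ^ 2 / (2 * ψ) / θ) - lam / 2 * θ)) :=
    fun θ (hθ : 0 < θ) => by
      rw [show 2 * π * θ * ψ = 2 * π * ψ * θ by ring, mul_rpow (by positivity) hθ.le,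
        sub_eq_add_neg, exp_add]
      field_simp
  have hexponent : 2 * √(β ^ 2 / (2 * ψ) * (lam / 2)) = √(lam / ψ) * |β| := by
    rw [← sqrt_sq_eq_abs, ← sqrt_mul (by positivity), ← sqrt_mul_self zero_le_two,
      ← sqrt_mul (by positivity)]
    congr 1
    field_simp
    ring
  have hconstant :
      lam / 2 * (2 * π * ψ) ^ (-(1 : ℝ) / 2) * √(π / (lam / 2)) = 1 / 2 * √(lam / ψ) := by
    rw [neg_div, rpow_neg (by positivity), ← sqrt_eq_rpow,
      sqrt_div' π (by positivity : 0 ≤ lam / 2), sqrt_div hlam.le, sqrt_div hlam.le,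
      sqrt_mul (by positivity), sqrt_mul (by positivity)]
    field_simp
    exact (sq_sqrt hlam.le).symm
  rw [setIntegral_congr_fun measurableSet_Ioi hintegrand, integral_const_mul,
    integral_Ioi_rpow_neg_half_mul_exp_neg_div_sub_mul (by positivity) (by positivity),
    hexponent, ← mul_assoc, hconstant, neg_mul]
end
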